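/- arXiv:math/0502204 — 6 statements merged into one kernel-verified Lean document; each statement's English description precedes it below -/
import Mathlib

section
/- Let 0 < q < 1 be real, u complex with |u| < 1, w ≥ 0 real, and w₁,…,w_r, v₁,…,v_r positive reals. Then for every nonnegative integer n, (1-u)^r · ∑_{n₁,…,n_r=0}^{∞} u^{∑ᵢ vᵢ nᵢ} · ([w + ∑ᵢ wᵢ nᵢ]_q)^n = ((1-u)^r/(1-q)^n) · ∑_{l=0}^{n} C(n,l)·(-1)^l·q^{l w}·∏_{j=1}^{r} 1/(1 - q^{l w_j} u^{v_j}). -/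
open Complex Finset

lemma hasSum_pi_prod : ∀ {r : ℕ} (f : Fin r → ℕ → ℂ) (S : Fin r → ℂ),
    (∀ i, HasSum (f i) (S i)) →
    HasSum (fun m : Fin r → ℕ => ∏ i, f i (m i)) (∏ i, S i) := by
  intro r
  induction r with
  | zero =>
    intro f S _
    simp only [Finset.univ_eq_empty, Finset.prod_empty]
    exact hasSum_single default (fun m hm => absurd (Subsingleton.elim m default) hm)
  | succ r ih =>
    intro f S hf
    have ht := ih (fun i => f i.succ) (fun i => S i.succ) (fun i => hf i.succ)
    set G : (Fin r → ℕ) → ℂ := fun m => ∏ i : Fin r, f i.succ (m i) with hG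
    have h0 := hf 0
    have hn0 : Summable (fun k => ‖f 0 k‖) := h0.summable.norm
    have hnt : Summable (fun m : Fin r → ℕ => ‖G m‖) := ht.summable.norm
    have hsum : Summable (fun p : ℕ × (Fin r → ℕ) => f 0 p.1 * G p.2) :=
      summable_mul_of_summable_norm hn0 hnt
    have hmul : HasSum (fun p : ℕ × (Fin r → ℕ) => f 0 p.1 * G p.2)
        (S 0 * ∏ i : Fin r, S i.succ) := h0.mul ht hsum
    have key := (((Fin.consEquiv (fun _ => ℕ)).symm).hasSum_iff).2 hmul
    have h2 : HasSum (fun m : Fin (r+1) → ℕ => ∏ i, f i (m i))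
        (S 0 * ∏ i : Fin r, S i.succ) := by
      convert key using 1
      funext m
      simp [hG, Fin.consEquiv, Fin.prod_univ_succ, Fin.tail]
    simpa [Fin.prod_univ_succ] using h2

lemma cpow_finset_sum {u : ℂ} (hu : u ≠ 0) {ι : Type*} (s : Finset ι) (f : ι → ℂ) :
    u ^ (∑ i ∈ s, f i) = ∏ i ∈ s, u ^ f i := by
  classical
  induction s using Finset.induction with
  | empty => simp
  | insert _ _ h ih => rw [Finset.sum_insert h, Finset.prod_insert h, Complex.cpow_add _ _ hu, ih]

lemma u_prod (u : ℂ) {r : ℕ} (v : Fin r → ℝ) (hv : ∀ i, 0 < v i) (m : Fin r → ℕ) :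
    u ^ ((∑ i, v i * m i : ℝ) : ℂ) = ∏ i, (u ^ ((v i : ℝ) : ℂ)) ^ (m i) := by
  rcases eq_or_ne u 0 with rfl | hu
  · by_cases h : ∀ i, m i = 0
    · have hs : (∑ i, v i * m i : ℝ) = 0 :=
        Finset.sum_eq_zero fun i _ => by simp [h i]
      rw [hs]
      simp [h]
    · push_neg at h
      obtain ⟨i0, hi0⟩ := h
      have hs : (0:ℝ) < ∑ i, v i * m i :=
        Finset.sum_pos' (fun i _ => mul_nonneg (hv i).le (Nat.cast_nonneg _))
          ⟨i0, Finset.mem_univ _,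
            mul_pos (hv i0) (by exact_mod_cast Nat.pos_of_ne_zero hi0)⟩
      rw [Complex.zero_cpow (by exact_mod_cast hs.ne' : ((∑ i, v i * m i : ℝ) : ℂ) ≠ 0)]
      refine (Finset.prod_eq_zero (Finset.mem_univ i0) ?_).symm
      rw [Complex.zero_cpow (Complex.ofReal_ne_zero.mpr (hv i0).ne')]
      exact zero_pow hi0
  · have hc : ((∑ i, v i * m i : ℝ) : ℂ) = ∑ i, ((v i : ℝ) : ℂ) * ((m i : ℕ) : ℂ) := by
      push_cast; ring
    rw [hc, cpow_finset_sum hu]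
    exact Finset.prod_congr rfl fun i _ => Complex.cpow_mul_nat u _ (m i)

lemma q_pow (q : ℝ) (hq : 0 < q) {r : ℕ} (w : ℝ) (w' : Fin r → ℝ) (m : Fin r → ℕ) (l : ℕ) :
    (q ^ (w + ∑ i, w' i * m i)) ^ l
      = q ^ ((l : ℝ) * w) * ∏ i, (q ^ ((l : ℝ) * w' i)) ^ (m i) := by
  have h1 : (q ^ (w + ∑ i, w' i * m i)) ^ l = q ^ ((l : ℝ) * (w + ∑ i, w' i * m i)) := by
    rw [← Real.rpow_natCast (q ^ (w + ∑ i, w' i * m i)) l, ← Real.rpow_mul hq.le, mul_comm]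
  rw [h1, mul_add, Real.rpow_add hq, Finset.mul_sum]
  congr 1
  rw [Real.rpow_sum_of_pos hq]
  refine Finset.prod_congr rfl fun i _ => ?_
  rw [show (l : ℝ) * (w' i * (m i : ℝ)) = ((l : ℝ) * w' i) * ((m i : ℕ) : ℝ) by ring,
    Real.rpow_mul_natCast hq.le]

lemma binom_expand (z : ℂ) (n : ℕ) :
    (1 - z) ^ n = ∑ l ∈ Finset.range (n + 1), (n.choose l : ℂ) * (-1) ^ l * z ^ l := by
  rw [sub_eq_add_neg, add_comm, add_pow]
  refine Finset.sum_congr rfl fun l _ => ?_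
  rw [neg_pow]
  ring

theorem stmt_5 (q : ℝ) (hq0 : 0 < q) (hq1 : q < 1) (u : ℂ) (hu : ‖u‖ < 1)
    (w : ℝ) (hw : 0 ≤ w) (r : ℕ) (w' v : Fin r → ℝ)
    (hw' : ∀ i, 0 < w' i) (hv : ∀ i, 0 < v i) (n : ℕ) :
    (1 - u) ^ r *
        ∑' m : Fin r → ℕ,
          u ^ ((∑ i, v i * m i : ℝ) : ℂ) *
            ((((1 - q ^ (w + ∑ i, w' i * m i)) / (1 - q) : ℝ) : ℂ)) ^ n =
      ((1 - u) ^ r / (1 - (q : ℂ)) ^ n) *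
        ∑ l ∈ Finset.range (n + 1),
          (n.choose l : ℂ) * (-1 : ℂ) ^ l * ((q ^ (l * w) : ℝ) : ℂ) *
            ∏ j, 1 / (1 - ((q ^ (l * w' j) : ℝ) : ℂ) * u ^ ((v j : ℝ) : ℂ)) := by
  set g : ℕ → Fin r → ℂ := fun l i => ((q ^ ((l : ℝ) * w' i) : ℝ) : ℂ) * u ^ ((v i : ℝ) : ℂ)
    with hg
  have hgnorm : ∀ l i, ‖g l i‖ < 1 := by
    intro l i
    have habs : ‖u ^ ((v i : ℝ) : ℂ)‖ < 1 := by
      have h1 : ‖u ^ ((v i : ℝ) : ℂ)‖ ≤ ‖u‖ ^ (v i) := by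
        refine le_trans (Complex.norm_cpow_le u _) ?_
        simp
      refine lt_of_le_of_lt h1 ?_
      rcases eq_or_lt_of_le (norm_nonneg u) with h0 | h0
      · rw [← h0, Real.zero_rpow (hv i).ne']; norm_num
      · exact Real.rpow_lt_one (norm_nonneg u) hu (hv i)
    have hqle : |(q ^ ((l : ℝ) * w' i) : ℝ)| ≤ 1 := by
      rw [_root_.abs_of_nonneg (Real.rpow_nonneg hq0.le _)]
      exact Real.rpow_le_one hq0.le hq1.le (mul_nonneg (Nat.cast_nonneg l) (hw' i).le)
    calc ‖g l i‖ = |(q ^ ((l : ℝ) * w' i) : ℝ)| * ‖u ^ ((v i : ℝ) : ℂ)‖ := by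
          rw [hg]; simp [Complex.norm_real]
      _ ≤ 1 * ‖u ^ ((v i : ℝ) : ℂ)‖ :=
          mul_le_mul_of_nonneg_right hqle (norm_nonneg _)
      _ < 1 := by simpa using habs
  have hgeom : ∀ l, HasSum (fun m : Fin r → ℕ => ∏ i, (g l i) ^ (m i))
      (∏ i, (1 - g l i)⁻¹) :=
    fun l => hasSum_pi_prod _ _ fun i => hasSum_geometric_of_norm_lt_one (hgnorm l i)
  set c : ℕ → ℂ := fun l => (n.choose l : ℂ) * (-1) ^ l * ((q ^ ((l : ℝ) * w) : ℝ) : ℂ) with hc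
  -- pointwise identity
  have hpt : ∀ m : Fin r → ℕ,
      u ^ ((∑ i, v i * m i : ℝ) : ℂ) *
        ((((1 - q ^ (w + ∑ i, w' i * m i)) / (1 - q) : ℝ) : ℂ)) ^ n
      = (∑ l ∈ Finset.range (n + 1), c l * ∏ i, (g l i) ^ (m i)) / (1 - (q : ℂ)) ^ n := by
    intro m
    have hcast : ((((1 - q ^ (w + ∑ i, w' i * m i)) / (1 - q) : ℝ) : ℂ)) ^ n
        = ((1 : ℂ) - ((q ^ (w + ∑ i, w' i * m i) : ℝ) : ℂ)) ^ n / (1 - (q : ℂ)) ^ n := by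
      push_cast
      rw [div_pow]
    rw [hcast, binom_expand, u_prod u v hv m, ← mul_div_assoc, Finset.mul_sum]
    congr 1
    refine Finset.sum_congr rfl fun l _ => ?_
    have hql : (((q ^ (w + ∑ i, w' i * m i) : ℝ) : ℂ)) ^ l
        = ((q ^ ((l : ℝ) * w) : ℝ) : ℂ) * ∏ i, (((q ^ ((l : ℝ) * w' i) : ℝ) : ℂ)) ^ (m i) := by
      rw [← Complex.ofReal_pow, q_pow q hq0 w w' m l]
      push_cast
      rfl
    rw [hql, hc, hg]
    simp only [mul_pow, Finset.prod_mul_distrib]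
    ring
  have hfin : HasSum (fun m : Fin r → ℕ => ∑ l ∈ Finset.range (n + 1), c l * ∏ i, (g l i) ^ (m i))
      (∑ l ∈ Finset.range (n + 1), c l * ∏ i, (1 - g l i)⁻¹) :=
    hasSum_sum fun l _ => (hgeom l).mul_left (c l)
  have hT : (∑' m : Fin r → ℕ,
      u ^ ((∑ i, v i * m i : ℝ) : ℂ) *
        ((((1 - q ^ (w + ∑ i, w' i * m i)) / (1 - q) : ℝ) : ℂ)) ^ n)
      = (∑ l ∈ Finset.range (n + 1), c l * ∏ i, (1 - g l i)⁻¹) / (1 - (q : ℂ)) ^ n := by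
    rw [tsum_congr hpt]
    exact (hfin.div_const _).tsum_eq
  rw [hT]
  rw [div_mul_eq_mul_div, mul_comm ((1 - u) ^ r), mul_div_assoc, ← mul_div_assoc,
    mul_comm _ ((1 - u) ^ r), mul_div_assoc]
  congr 2
  refine Finset.sum_congr rfl fun l _ => ?_
  rw [hc, hg]
  simp only [one_div]
end

section
/- Let u be a complex number with |u| > 1 and let w, a₁,…,a_r be positive reals. Then for each nonnegative integer n, the limit as real q → 1⁻ of H^{(r)}_{n,q}(u,w|a₁,…,a_r:1,…,1) equals H_n^{(r)}(u⁻¹, w|a₁,…,a_r), where H^{(r)}_{n,q}(u,w|a₁,…,a_r:1,…,1) = ((1-u⁻¹)^r/(1-q)^n)·∑_{l=0}^{n} C(n,l)(-1)^l q^{lw} ∏_{j=1}^{r}(1-q^{l a_j} u⁻¹)^{-1} and H_n^{(r)}(u⁻¹,w|a₁,…,a_r) = (1-u⁻¹)^r · ∑_{m₁,…,m_r=0}^{∞} u^{-(m₁+⋯+m_r)} (w + m₁a₁+⋯+m_r a_r)^n. -/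
open Complex Filter



lemma aux_pi_summable_norm {R : Type*} [NormedCommRing R] : ∀ {r : ℕ} (f : Fin r → ℕ → R),
    (∀ j, Summable fun m => ‖f j m‖) →
    Summable fun m : Fin r → ℕ => ‖∏ j, f j (m j)‖ := by
  intro r
  induction r with
  | zero => intro f _; exact Summable.of_finite
  | succ r ih =>
      intro f hf
      have key := Summable.mul_norm (hf 0) (ih (fun j => f j.succ) (fun j => hf j.succ))
      have := ((Fin.consEquiv (fun _ : Fin (r+1) => ℕ)).summable_iff
        (f := fun m : Fin (r+1) → ℕ => ‖∏ j, f j (m j)‖)).mp ?_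
      · exact this
      · refine key.congr fun z => ?_
        simp [Function.comp, Fin.prod_univ_succ, Fin.consEquiv]

lemma aux_pi_tsum_prod {R : Type*} [NormedCommRing R] [CompleteSpace R] : ∀ {r : ℕ}
    (f : Fin r → ℕ → R), (∀ j, Summable fun m => ‖f j m‖) →
    ∑' m : Fin r → ℕ, ∏ j, f j (m j) = ∏ j, ∑' m, f j m := by
  intro r
  induction r with
  | zero =>
      intro f _
      rw [tsum_eq_single (fun i => i.elim0) (fun b hb => absurd (Subsingleton.elim b _) hb)]
      simp
  | succ r ih =>
      intro f hf
      have h2 := ih (fun j => f j.succ) (fun j => hf j.succ)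
      rw [← (Fin.consEquiv (fun _ : Fin (r+1) => ℕ)).tsum_eq
        (f := fun m : Fin (r+1) → ℕ => ∏ j, f j (m j))]
      have : ∀ z : ℕ × (Fin r → ℕ),
          (∏ j, f j ((Fin.consEquiv (fun _ : Fin (r+1) => ℕ)) z j)) =
          f 0 z.1 * ∏ j : Fin r, f j.succ (z.2 j) := by
        intro z; simp [Fin.prod_univ_succ, Fin.consEquiv]
      rw [tsum_congr this,
        ← tsum_mul_tsum_of_summable_norm (hf 0) (aux_pi_summable_norm (fun j => f j.succ) (fun j => hf j.succ)),
        Fin.prod_univ_succ, h2]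

lemma aux_binom {n : ℕ} (y : ℂ) :
    ∑ l ∈ Finset.range (n + 1), (n.choose l : ℂ) * (-1 : ℂ) ^ l * y ^ l = (1 - y) ^ n := by
  have := add_pow (-y) 1 n
  simp only [one_pow, mul_one] at this
  rw [sub_eq_add_neg, add_comm (1:ℂ) (-y), this]
  refine Finset.sum_congr rfl fun l _ => ?_
  rw [neg_pow]; ring

lemma aux_rpow_prod {q : ℝ} (hq : 0 < q) {ι : Type*} (s : Finset ι) (e : ι → ℝ) :
    q ^ (∑ i ∈ s, e i) = ∏ i ∈ s, q ^ e i := by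
  simp only [Real.rpow_def_of_pos hq, ← Real.exp_sum, Finset.mul_sum]

lemma aux_slope {c : ℝ} (hc : 0 < c) :
    Tendsto (fun q : ℝ => (1 - q ^ c) / (1 - q)) (nhdsWithin 1 (Set.Iio 1)) (nhds c) := by
  have hd : HasDerivAt (fun x : ℝ => x ^ c) (c * (1:ℝ) ^ (c - 1)) 1 :=
    Real.hasDerivAt_rpow_const (Or.inl one_ne_zero)
  rw [Real.one_rpow, mul_one] at hd
  have h := hasDerivAt_iff_tendsto_slope.mp hd
  have h2 := h.mono_left (nhdsWithin_mono 1 (fun x hx => by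
    simp only [Set.mem_compl_iff, Set.mem_singleton_iff]
    exact ne_of_lt hx))
  refine h2.congr fun q => ?_
  rw [slope_def_field]
  rw [Real.one_rpow, show (1 - q ^ c) = -(q ^ c - 1) by ring,
    show (1 - q) = -(q - 1) by ring, neg_div_neg_eq]

lemma aux_ratio_bound {c : ℝ} (hc : 0 < c) {q : ℝ} (hq : q ∈ Set.Ioo (0:ℝ) 1) :
    (1 - q ^ c) / (1 - q) ∈ Set.Icc 0 (c + 1) := by
  obtain ⟨hq0, hq1⟩ := hq
  have h1q : 0 < 1 - q := by linarith
  constructor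
  · apply div_nonneg _ h1q.le
    have : q ^ c ≤ 1 := Real.rpow_le_one hq0.le hq1.le hc.le
    linarith
  · rcases le_total c 1 with h | h
    · have : q ^ c ≥ q ^ (1:ℝ) := Real.rpow_le_rpow_of_exponent_ge hq0 hq1.le h
      rw [Real.rpow_one] at this
      rw [div_le_iff₀ h1q]
      nlinarith
    · have hb := one_add_mul_self_le_rpow_one_add (s := q - 1) (by linarith) h
      rw [show (1 : ℝ) + (q - 1) = q by ring] at hb
      rw [div_le_iff₀ h1q]
      nlinarith

lemma aux_summable_one_add {t : ℝ} (ht : |t| < 1) (n : ℕ) :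
    Summable fun k : ℕ => (1 + (k : ℝ)) ^ n * t ^ k := by
  have hs : Summable fun k : ℕ => ∑ i ∈ Finset.range (n + 1),
      ((k : ℝ) ^ i * (n.choose i : ℝ)) * t ^ k := by
    refine summable_sum fun i _ => ?_
    have := summable_pow_mul_geometric_of_norm_lt_one (R := ℝ) i (by rwa [Real.norm_eq_abs])
    simpa [mul_comm, mul_assoc, mul_left_comm] using this.mul_right (n.choose i : ℝ)
  refine hs.congr fun k => ?_
  rw [← Finset.sum_mul]
  congr 1
  rw [add_comm (1:ℝ) (k:ℝ), add_pow]
  simp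


lemma aux_one_le_prod {ι : Type*} (s : Finset ι) (f : ι → ℝ) (h : ∀ i ∈ s, 1 ≤ f i) :
    1 ≤ ∏ i ∈ s, f i :=
  calc (1:ℝ) = ∏ _i ∈ s, 1 := (Finset.prod_const_one).symm
    _ ≤ ∏ i ∈ s, f i := Finset.prod_le_prod (fun i _ => zero_le_one) h

lemma aux_single_le_prod {ι : Type*} [DecidableEq ι] (s : Finset ι) (f : ι → ℝ)
    (h : ∀ i ∈ s, 1 ≤ f i) {i : ι} (hi : i ∈ s) : f i ≤ ∏ j ∈ s, f j := by
  rw [← Finset.mul_prod_erase s f hi]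
  nlinarith [aux_one_le_prod (s.erase i) f (fun j hj => h j (Finset.mem_of_mem_erase hj)), h i hi]

theorem stmt_6 (u : ℂ) (hu : 1 < ‖u‖) (w : ℝ) (hw : 0 < w)
    (r : ℕ) (a : Fin r → ℝ) (ha : ∀ i, 0 < a i) (n : ℕ) :
    Tendsto
      (fun q : ℝ =>
        ((1 - u⁻¹) ^ r / (1 - (q : ℂ)) ^ n) *
          ∑ l ∈ Finset.range (n + 1),
            (n.choose l : ℂ) * (-1 : ℂ) ^ l * ((q ^ (l * w) : ℝ) : ℂ) *
              ∏ j, (1 - ((q ^ (l * a j) : ℝ) : ℂ) * u⁻¹)⁻¹)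
      (nhdsWithin 1 (Set.Iio 1))
      (nhds ((1 - u⁻¹) ^ r *
        ∑' m : Fin r → ℕ,
          (u⁻¹) ^ (∑ i, m i) * (((w + ∑ i, m i * a i : ℝ) : ℂ)) ^ n)) := by
  set x := u⁻¹ with hxdef
  have hx : ‖x‖ < 1 := by
    rw [hxdef, norm_inv]
    exact inv_lt_one_of_one_lt₀ hu
  set c : (Fin r → ℕ) → ℝ := fun m => w + ∑ i, (m i : ℝ) * a i with hcdef
  have hc : ∀ m, 0 < c m := fun m =>
    add_pos_of_pos_of_nonneg hw (Finset.sum_nonneg fun i _ =>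
      mul_nonneg (Nat.cast_nonneg _) (ha i).le)
  have hIoo : Set.Ioo (0:ℝ) 1 ∈ nhdsWithin (1:ℝ) (Set.Iio 1) :=
    Ioo_mem_nhdsLT_of_mem (by constructor <;> norm_num)
  -- Step A : pointwise identity for q ∈ (0,1)
  have hA : ∀ q ∈ Set.Ioo (0:ℝ) 1,
      ((1 - x) ^ r / (1 - (q : ℂ)) ^ n) *
          ∑ l ∈ Finset.range (n + 1),
            (n.choose l : ℂ) * (-1 : ℂ) ^ l * ((q ^ (l * w) : ℝ) : ℂ) *
              ∏ j, (1 - ((q ^ (l * a j) : ℝ) : ℂ) * x)⁻¹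
      = (1 - x) ^ r * ∑' m : Fin r → ℕ,
          x ^ (∑ i, m i) * ((((1 - q ^ c m) / (1 - q) : ℝ)) : ℂ) ^ n := by
    rintro q ⟨hq0, hq1⟩
    have hxle : ∀ (e : ℝ), 0 ≤ e → ‖((q ^ e : ℝ) : ℂ) * x‖ < 1 := by
      intro e he
      rw [norm_mul, Complex.norm_real, Real.norm_eq_abs,
        _root_.abs_of_nonneg (Real.rpow_nonneg hq0.le e)]
      calc q ^ e * ‖x‖ ≤ 1 * ‖x‖ :=
            mul_le_mul_of_nonneg_right (Real.rpow_le_one hq0.le hq1.le he) (norm_nonneg x)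
        _ = ‖x‖ := one_mul _
        _ < 1 := hx
    have hexp : ∀ (l : ℕ) (j : Fin r), (0:ℝ) ≤ (l : ℝ) * a j :=
      fun l j => mul_nonneg (Nat.cast_nonneg l) (ha j).le
    set f : ℕ → Fin r → ℕ → ℂ :=
      fun l j m => ((((q ^ ((l : ℝ) * a j) : ℝ)) : ℂ) * x) ^ m with hfdef
    have hfs : ∀ l j, Summable fun m => ‖f l j m‖ := by
      intro l j
      exact (summable_geometric_of_lt_one (norm_nonneg _)
        (hxle _ (hexp l j))).congr fun m => (norm_pow _ _).symm
    have step1 : ∀ l : ℕ, (∏ j, (1 - (((q ^ ((l:ℝ) * a j) : ℝ)) : ℂ) * x)⁻¹)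
        = ∑' m : Fin r → ℕ, ∏ j, f l j (m j) := by
      intro l
      rw [aux_pi_tsum_prod (f l) (hfs l)]
      exact Finset.prod_congr rfl fun j _ =>
        (tsum_geometric_of_norm_lt_one (hxle _ (hexp l j))).symm
    have hsummand : ∀ l, Summable fun m : Fin r → ℕ =>
        (n.choose l : ℂ) * (-1 : ℂ) ^ l * ((q ^ ((l:ℝ) * w) : ℝ) : ℂ) * ∏ j, f l j (m j) :=
      fun l => ((aux_pi_summable_norm (f l) (hfs l)).of_norm).mul_left _
    have hterm : ∀ (m : Fin r → ℕ) (l : ℕ),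
        (n.choose l : ℂ) * (-1 : ℂ) ^ l * ((q ^ ((l:ℝ) * w) : ℝ) : ℂ) * ∏ j, f l j (m j)
        = (n.choose l : ℂ) * (-1 : ℂ) ^ l * (((q ^ c m : ℝ)) : ℂ) ^ l * x ^ (∑ i, m i) := by
      intro m l
      have h1 : ∏ j, f l j (m j)
          = ((∏ j, (q ^ ((l:ℝ) * a j)) ^ (m j) : ℝ) : ℂ) * x ^ (∑ i, m i) := by
        simp only [hfdef, mul_pow, Finset.prod_mul_distrib, Finset.prod_pow_eq_pow_sum]
        push_cast
        ring
      have h2 : (q ^ ((l:ℝ) * w)) * ∏ j, (q ^ ((l:ℝ) * a j)) ^ (m j) = (q ^ c m) ^ l := by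
        have e1 : ∀ j : Fin r, (q ^ ((l:ℝ) * a j)) ^ (m j) = q ^ ((l:ℝ) * a j * (m j : ℝ)) := by
          intro j
          rw [← Real.rpow_natCast (q ^ ((l:ℝ) * a j)) (m j), ← Real.rpow_mul hq0.le]
        rw [Finset.prod_congr rfl (fun j _ => e1 j), ← aux_rpow_prod hq0, ← Real.rpow_add hq0,
          ← Real.rpow_natCast (q ^ c m) l, ← Real.rpow_mul hq0.le]
        congr 1
        have e2 : ∑ j, (l:ℝ) * a j * (m j : ℝ) = (∑ i, (m i : ℝ) * a i) * l := by
          rw [Finset.sum_mul]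
          exact Finset.sum_congr rfl fun j _ => by ring
        rw [e2, hcdef]
        ring
      rw [h1, ← Complex.ofReal_pow, ← h2, Complex.ofReal_mul]
      ring
    have sum_eq : (∑ l ∈ Finset.range (n + 1),
            (n.choose l : ℂ) * (-1 : ℂ) ^ l * ((q ^ ((l:ℝ) * w) : ℝ) : ℂ) *
              ∏ j, (1 - ((q ^ ((l:ℝ) * a j) : ℝ) : ℂ) * x)⁻¹)
        = ∑' m : Fin r → ℕ, x ^ (∑ i, m i) * ((1 : ℂ) - (((q ^ c m : ℝ)) : ℂ)) ^ n := by
      calc (∑ l ∈ Finset.range (n + 1),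
            (n.choose l : ℂ) * (-1 : ℂ) ^ l * ((q ^ ((l:ℝ) * w) : ℝ) : ℂ) *
              ∏ j, (1 - ((q ^ ((l:ℝ) * a j) : ℝ) : ℂ) * x)⁻¹)
          = ∑ l ∈ Finset.range (n + 1), ∑' m : Fin r → ℕ,
              (n.choose l : ℂ) * (-1 : ℂ) ^ l * ((q ^ ((l:ℝ) * w) : ℝ) : ℂ) *
                ∏ j, f l j (m j) := by
            refine Finset.sum_congr rfl fun l _ => ?_
            rw [step1 l, ← tsum_mul_left]
        _ = ∑' m : Fin r → ℕ, ∑ l ∈ Finset.range (n + 1),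
              (n.choose l : ℂ) * (-1 : ℂ) ^ l * ((q ^ ((l:ℝ) * w) : ℝ) : ℂ) *
                ∏ j, f l j (m j) := (Summable.tsum_finsetSum fun l _ => hsummand l).symm
        _ = ∑' m : Fin r → ℕ, x ^ (∑ i, m i) * ((1 : ℂ) - (((q ^ c m : ℝ)) : ℂ)) ^ n := by
            refine tsum_congr fun m => ?_
            rw [Finset.sum_congr rfl fun l _ => hterm m l, ← Finset.sum_mul, aux_binom]
            ring
    rw [sum_eq]
    have hdiv : ∀ m : Fin r → ℕ,
        x ^ (∑ i, m i) * ((((1 - q ^ c m) / (1 - q) : ℝ)) : ℂ) ^ n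
        = (x ^ (∑ i, m i) * ((1 : ℂ) - (((q ^ c m : ℝ)) : ℂ)) ^ n) * (((1 : ℂ) - (q:ℂ)) ^ n)⁻¹ := by
      intro m
      push_cast
      rw [div_pow, div_eq_mul_inv]
      ring
    rw [tsum_congr hdiv, tsum_mul_right, div_mul_eq_mul_div, mul_div_assoc, div_eq_mul_inv]
  -- Step B : convergence of the series
  have hB : Tendsto (fun q : ℝ => ∑' m : Fin r → ℕ,
      x ^ (∑ i, m i) * ((((1 - q ^ c m) / (1 - q) : ℝ)) : ℂ) ^ n)
      (nhdsWithin 1 (Set.Iio 1))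
      (nhds (∑' m : Fin r → ℕ, x ^ (∑ i, m i) * ((c m : ℝ) : ℂ) ^ n)) := by
    have hg : ∀ m : Fin r → ℕ, Tendsto (fun q : ℝ =>
        x ^ (∑ i, m i) * ((((1 - q ^ c m) / (1 - q) : ℝ)) : ℂ) ^ n)
        (nhdsWithin 1 (Set.Iio 1)) (nhds (x ^ (∑ i, m i) * ((c m : ℝ) : ℂ) ^ n)) := by
      intro m
      exact (((Complex.continuous_ofReal.tendsto (c m)).comp (aux_slope (hc m))).pow n).const_mul _
    refine tendsto_tsum_of_dominated_convergence
      (bound := fun m : Fin r → ℕ => ‖x‖ ^ (∑ i, m i) * (c m + 1) ^ n) ?_ hg ?_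
    · -- summability of the bound
      set K : ℝ := (w + 1) + ∑ i, a i with hKdef
      have hxnn : (0:ℝ) ≤ ‖x‖ := norm_nonneg x
      have hmaj : Summable fun m : Fin r → ℕ =>
          K ^ n * ∏ i, (‖x‖ ^ (m i) * (1 + (m i : ℝ)) ^ n) := by
        refine Summable.mul_left _ ?_
        have hco : ∀ i : Fin r, Summable fun k : ℕ => ‖‖x‖ ^ k * (1 + (k : ℝ)) ^ n‖ := by
          intro i
          have := aux_summable_one_add (t := ‖x‖) (by rwa [_root_.abs_of_nonneg hxnn]) n
          refine this.congr fun k => ?_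
          rw [Real.norm_eq_abs, _root_.abs_of_nonneg (by positivity)]
          ring
        have := aux_pi_summable_norm (R := ℝ)
          (fun i k => ‖x‖ ^ k * (1 + (k : ℝ)) ^ n) hco
        refine this.congr fun m => ?_
        beta_reduce
        rw [Real.norm_eq_abs, _root_.abs_of_nonneg (Finset.prod_nonneg fun i _ => by positivity)]
      refine Summable.of_nonneg_of_le (fun m => mul_nonneg (pow_nonneg hxnn _) (pow_nonneg (by linarith [(hc m).le]) n)) (fun m => ?_) hmaj
      have hone : ∀ j ∈ Finset.univ (α := Fin r), (1:ℝ) ≤ 1 + (m j : ℝ) := fun j _ => by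
        have : (0:ℝ) ≤ (m j : ℝ) := Nat.cast_nonneg _
        linarith
      have hP1 : (1:ℝ) ≤ ∏ j, (1 + (m j : ℝ)) := aux_one_le_prod _ _ hone
      have hPi : ∀ i : Fin r, (m i : ℝ) ≤ ∏ j, (1 + (m j : ℝ)) := by
        intro i
        calc (m i : ℝ) ≤ 1 + (m i : ℝ) := by linarith
          _ ≤ ∏ j, (1 + (m j : ℝ)) :=
            aux_single_le_prod _ _ hone (Finset.mem_univ i)
      have hcm : c m + 1 ≤ K * ∏ j, (1 + (m j : ℝ)) := by
        have h1 : ∑ i, (m i : ℝ) * a i ≤ (∑ i, a i) * ∏ j, (1 + (m j : ℝ)) := by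
          rw [Finset.sum_mul]
          refine Finset.sum_le_sum fun i _ => ?_
          calc (m i : ℝ) * a i ≤ (∏ j, (1 + (m j : ℝ))) * a i :=
                mul_le_mul_of_nonneg_right (hPi i) (ha i).le
            _ = a i * ∏ j, (1 + (m j : ℝ)) := by ring
        have h2 : w + 1 ≤ (w + 1) * ∏ j, (1 + (m j : ℝ)) := by
          nlinarith
        rw [hcdef, hKdef]
        calc w + ∑ i, (m i : ℝ) * a i + 1
            = (w + 1) + ∑ i, (m i : ℝ) * a i := by ring
          _ ≤ (w + 1) * (∏ j, (1 + (m j : ℝ))) + (∑ i, a i) * ∏ j, (1 + (m j : ℝ)) := by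
              linarith
          _ = (w + 1 + ∑ i, a i) * ∏ j, (1 + (m j : ℝ)) := by ring
      have hcm0 : (0:ℝ) ≤ c m + 1 := by linarith [(hc m).le]
      calc ‖x‖ ^ (∑ i, m i) * (c m + 1) ^ n
          ≤ ‖x‖ ^ (∑ i, m i) * (K * ∏ j, (1 + (m j : ℝ))) ^ n :=
            mul_le_mul_of_nonneg_left (pow_le_pow_left₀ hcm0 hcm n) (by positivity)
        _ = K ^ n * ∏ i, (‖x‖ ^ (m i) * (1 + (m i : ℝ)) ^ n) := by
            rw [mul_pow, ← Finset.prod_pow_eq_pow_sum, Finset.prod_mul_distrib,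
              ← Finset.prod_pow]
            ring
    · -- the domination bound
      filter_upwards [hIoo] with q hq
      intro m
      obtain ⟨h0, hle⟩ := aux_ratio_bound (hc m) hq
      rw [norm_mul, norm_pow, norm_pow, Complex.norm_real, Real.norm_eq_abs, _root_.abs_of_nonneg h0]
      exact mul_le_mul_of_nonneg_left (pow_le_pow_left₀ h0 hle n) (by positivity)
  refine Tendsto.congr' ?_ (hB.const_mul ((1 - x) ^ r))
  filter_upwards [hIoo] with q hq
  exact (hA q hq).symm
end

section
/- Let 0 < q < 1 be real, u complex with 0 < |u| < 1, and w, w₁, v₁ positive reals. Define the Changhee q-zeta function ζ_q(s,w,u|w₁;v₁) = ∑_{n=0}^{∞} u^{v₁ n}/([w + w₁ n]_q)^s for s ∈ ℂ. Then for every positive integer n, ζ_q(-n, w, u|w₁;v₁) = (1/(1-u)) · H_{n,q}(u⁻¹, w|w₁;v₁), where H_{n,q}(u⁻¹,w|w₁;v₁) = ((1-u)/(1-q)^n)·∑_{l=0}^{n} C(n,l)·(-1)^l·q^{lw}/(1 - q^{w₁ l} u^{v₁}). -/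
open Complex

theorem stmt_7 (q : ℝ) (hq0 : 0 < q) (hq1 : q < 1) (u : ℂ)
    (hu0 : 0 < ‖u‖) (hu : ‖u‖ < 1)
    (w w₁ v₁ : ℝ) (hw : 0 < w) (hw₁ : 0 < w₁) (hv₁ : 0 < v₁) (n : ℕ) (hn : 0 < n) :
    (∑' m : ℕ, u ^ ((v₁ * m : ℝ) : ℂ) /
        ((((1 - q ^ (w + w₁ * m)) / (1 - q) : ℝ) : ℂ)) ^ (-(n : ℂ))) =
      (1 / (1 - u)) *
        (((1 - u) / (1 - (q : ℂ)) ^ n) *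
          ∑ l ∈ Finset.range (n + 1),
            (n.choose l : ℂ) * (-1 : ℂ) ^ l * ((q ^ (l * w) : ℝ) : ℂ) /
              (1 - ((q ^ (w₁ * l) : ℝ) : ℂ) * u ^ ((v₁ : ℝ) : ℂ))) := by
  have hq0' := hq0.le
  set a : ℂ := u ^ ((v₁ : ℝ) : ℂ) with ha
  have habs : ‖a‖ < 1 := by
    rw [ha, Complex.norm_cpow_real]
    exact Real.rpow_lt_one (norm_nonneg u) hu hv₁
  set R : ℝ := q ^ w₁ with hR
  have hR1 : R < 1 := Real.rpow_lt_one hq0' hq1 hw₁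
  have hR0 : 0 ≤ R := Real.rpow_nonneg hq0' w₁
  set Q : ℝ := q ^ w with hQ
  -- norm bound for each geometric ratio
  have hnorm : ∀ l : ℕ, ‖((R : ℂ)) ^ l * a‖ < 1 := by
    intro l
    rw [norm_mul, norm_pow]
    have h1 : ‖(R : ℂ)‖ ≤ 1 := by
      rw [Complex.norm_real, Real.norm_of_nonneg hR0]; exact hR1.le
    calc ‖(R:ℂ)‖ ^ l * ‖a‖ ≤ 1 * ‖a‖ := by
          gcongr; exact pow_le_one₀ (norm_nonneg _) h1
      _ = ‖a‖ := one_mul _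
      _ < 1 := habs
  -- rewrite each term of the series
  have hterm : ∀ m : ℕ, u ^ ((v₁ * m : ℝ) : ℂ) /
        ((((1 - q ^ (w + w₁ * m)) / (1 - q) : ℝ) : ℂ)) ^ (-(n : ℂ)) =
      ∑ l ∈ Finset.range (n + 1),
        ((1 - (q:ℂ))^n)⁻¹ * ((n.choose l : ℂ) * (-1:ℂ)^l * (Q:ℂ)^l) * (((R:ℂ))^l * a) ^ m := by
    intro m
    have hx : (0:ℝ) < w + w₁ * m := by positivity
    have hlt : q ^ (w + w₁ * m) < 1 := Real.rpow_lt_one hq0' hq1 hx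
    have hzpos : (0:ℝ) < (1 - q ^ (w + w₁ * m)) / (1 - q) := by
      apply div_pos <;> linarith
    have hcpow : ((((1 - q ^ (w + w₁ * m)) / (1 - q) : ℝ) : ℂ)) ^ (-(n : ℂ)) =
        (((((1 - q ^ (w + w₁ * m)) / (1 - q) : ℝ) : ℂ)) ^ n)⁻¹ := by
      rw [Complex.cpow_neg, Complex.cpow_natCast]
    have hu' : u ^ ((v₁ * m : ℝ) : ℂ) = a ^ m := by
      rw [ha, ← Complex.cpow_nat_mul]
      norm_cast
      rw [mul_comm]
    rw [hcpow, div_eq_mul_inv, inv_inv, hu']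
    -- expand the real rpow
    have hsplit : q ^ (w + w₁ * m) = Q * R ^ m := by
      rw [Real.rpow_add hq0, hQ, hR, ← Real.rpow_natCast (q ^ w₁) m,
        ← Real.rpow_mul hq0']
    rw [hsplit]
    push_cast
    have hbin : ((1:ℂ) - (Q:ℂ) * (R:ℂ) ^ m) ^ n =
        ∑ l ∈ Finset.range (n + 1),
          ((n.choose l : ℂ) * (-1:ℂ)^l * (Q:ℂ)^l) * ((R:ℂ)^l) ^ m := by
      have := add_pow (-((Q:ℂ) * (R:ℂ) ^ m)) 1 n
      rw [neg_add_eq_sub] at this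
      rw [show (1:ℂ) - (Q:ℂ) * (R:ℂ)^m = -((Q:ℂ)*(R:ℂ)^m) + 1 by ring, add_pow]
      refine Finset.sum_congr rfl fun l hl => ?_
      rw [neg_pow, mul_pow, one_pow, ← pow_mul, ← pow_mul]
      ring
    rw [div_pow, hbin, Finset.sum_div, Finset.mul_sum]
    refine Finset.sum_congr rfl fun l hl => ?_
    field_simp
    ring
  rw [tsum_congr hterm]
  rw [Summable.tsum_finsetSum (fun l _ => ((summable_geometric_of_norm_lt_one (hnorm l)).mul_left _))]
  have h1u : (1:ℂ) - u ≠ 0 := sub_ne_zero.mpr (by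
    intro h
    rw [← h] at hu
    simp at hu)
  have hq1c : (1:ℂ) - (q:ℝ) ≠ 0 := by
    intro h
    have : ((1 - q : ℝ) : ℂ) = 0 := by push_cast; linear_combination h
    have h2 : (1 - q : ℝ) = 0 := by exact_mod_cast this
    linarith
  have hQl : ∀ l : ℕ, ((q ^ ((l:ℝ) * w) : ℝ) : ℂ) = ((Q:ℝ):ℂ) ^ l := by
    intro l
    rw [mul_comm, Real.rpow_mul hq0', Real.rpow_natCast, hQ]
    push_cast
    try ring
  have hRl : ∀ l : ℕ, ((q ^ (w₁ * (l:ℝ)) : ℝ) : ℂ) = ((R:ℝ):ℂ) ^ l := by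
    intro l
    rw [Real.rpow_mul hq0', Real.rpow_natCast, hR]
    push_cast
    try ring
  rw [Finset.sum_congr rfl
    (fun l _ => by rw [tsum_mul_left, tsum_geometric_of_norm_lt_one (hnorm l)])]
  rw [show (1 / (1 - u)) *
        (((1 - u) / (1 - (q : ℂ)) ^ n) *
          ∑ l ∈ Finset.range (n + 1),
            (n.choose l : ℂ) * (-1 : ℂ) ^ l * ((q ^ (l * w) : ℝ) : ℂ) /
              (1 - ((q ^ (w₁ * l) : ℝ) : ℂ) * u ^ ((v₁ : ℝ) : ℂ))) =
      ((1 - (q:ℂ)) ^ n)⁻¹ *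
          ∑ l ∈ Finset.range (n + 1),
            (n.choose l : ℂ) * (-1 : ℂ) ^ l * ((q ^ (l * w) : ℝ) : ℂ) /
              (1 - ((q ^ (w₁ * l) : ℝ) : ℂ) * u ^ ((v₁ : ℝ) : ℂ))
    from by field_simp; exact Finset.sum_congr rfl fun x _ => by ring_nf]
  rw [Finset.mul_sum]
  refine Finset.sum_congr rfl fun l _ => ?_
  rw [hQl l, hRl l, ← ha, div_eq_mul_inv]
  ring
end

section
/- Let 0 < q < 1 be real, u complex with 0 < |u| < 1, w ≥ 0 real, and w₁,…,w_r, v₁,…,v_r positive reals. Define the multiple Changhee q-zeta function ζ_q^{(r)}(s,u,w|w₁,…,w_r;v₁,…,v_r) = ∑_{n₁,…,n_r=0}^{∞} u^{∑ᵢ vᵢ nᵢ}/([w + ∑ᵢ nᵢ wᵢ]_q)^s. Then for every positive integer n, ζ_q^{(r)}(-n,u,w|w₁,…;v₁,…) = (1/(1-u)^r)·H^{(r)}_{n,q}(u⁻¹,w|w₁,…;v₁,…), where H^{(r)}_{n,q}(u⁻¹,w|w₁,…;v₁,…) = ((1-u)^r/(1-q)^n)·∑_{l=0}^{n} C(n,l)(-1)^l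 q^{lw}·∏_{j=1}^{r}(1 - q^{l w_j} u^{v_j})^{-1}. -/
open Complex

lemma my_cpow_sum {x : ℂ} (hx : x ≠ 0) {ι : Type*} (s : Finset ι) (f : ι → ℂ) :
    x ^ (∑ i ∈ s, f i) = ∏ i ∈ s, x ^ f i := by
  induction s using Finset.cons_induction with
  | empty => simp
  | cons i s hi ih => rw [Finset.sum_cons, Finset.prod_cons, Complex.cpow_add _ _ hx, ih]

lemma my_binom (t : ℂ) (n : ℕ) :
    (1 - t) ^ n = ∑ l ∈ Finset.range (n + 1), (n.choose l : ℂ) * (-1) ^ l * t ^ l := by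
  rw [sub_eq_add_neg, add_comm, add_pow]
  refine Finset.sum_congr rfl fun l hl => ?_
  rw [neg_pow]; ring

lemma my_geom_pi (r : ℕ) (a : Fin r → ℂ) (h : ∀ j, ‖a j‖ < 1) :
    Summable (fun m : Fin r → ℕ => ‖∏ j, a j ^ m j‖) ∧
      ∑' m : Fin r → ℕ, ∏ j, a j ^ m j = ∏ j, (1 - a j)⁻¹ := by
  induction r with
  | zero =>
      have : Finite (Fin 0 → ℕ) := Finite.of_subsingleton
      constructor
      · exact Summable.of_finite
      · simp only [Finset.univ_eq_empty, Finset.prod_empty]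
        exact tsum_eq_single (fun i => i.elim0) (fun y hy => absurd (Subsingleton.elim y _) hy)
  | succ r ih =>
      obtain ⟨ihs, iht⟩ := ih (fun j => a j.succ) (fun j => h j.succ)
      have hg0 : Summable (fun k : ℕ => ‖a 0 ^ k‖) := by
        simpa [norm_pow] using summable_geometric_of_lt_one (norm_nonneg (a 0)) (h 0)
      have hgsum : Summable (fun p : ℕ × (Fin r → ℕ) =>
          ‖a 0 ^ p.1 * ∏ j, a j.succ ^ p.2 j‖) := by
        exact Summable.mul_norm (f := fun k : ℕ => a 0 ^ k)
          (g := fun m : Fin r → ℕ => ∏ j, a j.succ ^ m j) hg0 ihs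
      have hfun : ∀ m : Fin (r+1) → ℕ,
          ∏ j, a j ^ m j = a 0 ^ m 0 * ∏ j : Fin r, a j.succ ^ m j.succ := by
        intro m; exact Fin.prod_univ_succ _
      set e : (Fin (r+1) → ℕ) ≃ ℕ × (Fin r → ℕ) := (Fin.consEquiv fun _ : Fin (r+1) => ℕ).symm with he
      have hcomp : (fun m : Fin (r+1) → ℕ => ‖∏ j, a j ^ m j‖)
          = (fun p : ℕ × (Fin r → ℕ) => ‖a 0 ^ p.1 * ∏ j, a j.succ ^ p.2 j‖) ∘ e := by
        funext m; simp [hfun m, he, Fin.consEquiv, Fin.tail]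
      constructor
      · rw [hcomp]; exact (Equiv.summable_iff e).mpr hgsum
      · have h1 : ∑' m : Fin (r+1) → ℕ, ∏ j, a j ^ m j
            = ∑' p : ℕ × (Fin r → ℕ), a 0 ^ p.1 * ∏ j, a j.succ ^ p.2 j := by
          rw [← Equiv.tsum_eq e (fun p => a 0 ^ p.1 * ∏ j, a j.succ ^ p.2 j)]
          refine tsum_congr fun m => ?_
          simp [hfun m, he, Fin.consEquiv, Fin.tail]
        rw [h1, ← tsum_mul_tsum_of_summable_norm hg0 ihs,
          tsum_geometric_of_norm_lt_one (h 0), iht, Fin.prod_univ_succ]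

theorem stmt_8 (q : ℝ) (hq0 : 0 < q) (hq1 : q < 1) (u : ℂ)
    (hu0 : 0 < ‖u‖) (hu : ‖u‖ < 1)
    (w : ℝ) (hw : 0 ≤ w) (r : ℕ) (w' v : Fin r → ℝ)
    (hw' : ∀ i, 0 < w' i) (hv : ∀ i, 0 < v i) (n : ℕ) (hn : 0 < n) :
    (∑' m : Fin r → ℕ,
        u ^ ((∑ i, v i * m i : ℝ) : ℂ) /
          ((((1 - q ^ (w + ∑ i, m i * w' i)) / (1 - q) : ℝ) : ℂ)) ^ (-(n : ℂ))) =
      (1 / (1 - u) ^ r) *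
        (((1 - u) ^ r / (1 - (q : ℂ)) ^ n) *
          ∑ l ∈ Finset.range (n + 1),
            (n.choose l : ℂ) * (-1 : ℂ) ^ l * ((q ^ (l * w) : ℝ) : ℂ) *
              ∏ j, (1 - ((q ^ (l * w' j) : ℝ) : ℂ) * u ^ ((v j : ℝ) : ℂ))⁻¹) := by
  have hune : u ≠ 0 := by
    intro h; rw [h] at hu0; simp at hu0
  -- the geometric ratios
  set A : ℕ → Fin r → ℂ := fun l j => ((q ^ ((l : ℝ) * w' j) : ℝ) : ℂ) * u ^ ((v j : ℝ) : ℂ)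
    with hA
  have hAlt : ∀ l : ℕ, ∀ j, ‖A l j‖ < 1 := by
    intro l j
    have h1 : ‖(((q ^ ((l : ℝ) * w' j) : ℝ)) : ℂ)‖ = q ^ ((l : ℝ) * w' j) := by
      rw [Complex.norm_real, Real.norm_eq_abs, abs_of_pos (Real.rpow_pos_of_pos hq0 _)]
    have h2 : ‖u ^ ((v j : ℝ) : ℂ)‖ = ‖u‖ ^ (v j : ℝ) := by
      rw [Complex.norm_cpow_of_ne_zero hune]
      simp
    have h3 : q ^ ((l : ℝ) * w' j) ≤ 1 :=
      Real.rpow_le_one hq0.le hq1.le (mul_nonneg (Nat.cast_nonneg l) (hw' j).le)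
    have h4 : ‖u‖ ^ (v j : ℝ) < 1 :=
      Real.rpow_lt_one (norm_nonneg u) hu (hv j)
    have h5 : (0:ℝ) < q ^ ((l : ℝ) * w' j) := Real.rpow_pos_of_pos hq0 _
    have h6 : (0:ℝ) ≤ ‖u‖ ^ (v j : ℝ) := Real.rpow_nonneg (norm_nonneg u) _
    rw [hA, norm_mul, h1, h2]
    nlinarith
  have hQ1 : (1 : ℂ) - q ≠ 0 := by
    intro h
    have : (q : ℂ) = 1 := by linear_combination -h
    rw [Complex.ofReal_eq_one] at this
    linarith
  have hu1 : (1 : ℂ) - u ≠ 0 := by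
    intro h
    have : u = 1 := by linear_combination -h
    rw [this] at hu; simp at hu
  -- per-term identity
  have key : ∀ m : Fin r → ℕ,
      u ^ ((∑ i, v i * m i : ℝ) : ℂ) /
          ((((1 - q ^ (w + ∑ i, m i * w' i)) / (1 - q) : ℝ) : ℂ)) ^ (-(n : ℂ))
        = (1 / (1 - (q : ℂ))) ^ n * ∑ l ∈ Finset.range (n + 1),
            (n.choose l : ℂ) * (-1 : ℂ) ^ l * ((q ^ ((l : ℝ) * w) : ℝ) : ℂ) *
              ∏ j, (A l j) ^ (m j) := by
    intro m
    set E : ℝ := w + ∑ i, (m i : ℝ) * w' i with hE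
    have hprod : ∀ l : ℕ, ((q : ℝ) ^ E) ^ l
        = q ^ ((l : ℝ) * w) * ∏ j, (q ^ ((l : ℝ) * w' j)) ^ (m j) := by
      intro l
      have h1 : ∀ j : Fin r, (q ^ ((l : ℝ) * w' j)) ^ (m j)
          = q ^ (((l : ℝ) * w' j) * (m j : ℝ)) := by
        intro j
        rw [← Real.rpow_natCast (q ^ ((l : ℝ) * w' j)) (m j), ← Real.rpow_mul hq0.le]
      rw [Finset.prod_congr rfl (fun j _ => h1 j), ← Real.rpow_sum_of_pos hq0,
        ← Real.rpow_add hq0, ← Real.rpow_natCast ((q : ℝ) ^ E) l, ← Real.rpow_mul hq0.le]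
      congr 1
      rw [hE, add_mul, Finset.sum_mul, mul_comm]
      congr 1
      exact Finset.sum_congr rfl fun i _ => by ring
    have hu2 : u ^ (∑ i, ((v i : ℝ) : ℂ) * ((m i : ℕ) : ℂ)) = ∏ j, (u ^ ((v j : ℝ) : ℂ)) ^ (m j) := by
      have hc : (∑ i, ((v i : ℝ) : ℂ) * ((m i : ℕ) : ℂ)) = ∑ i, ((m i : ℕ) : ℂ) * ((v i : ℝ) : ℂ) :=
        Finset.sum_congr rfl fun i _ => by ring
      rw [hc, my_cpow_sum hune]
      exact Finset.prod_congr rfl fun j _ => Complex.cpow_nat_mul u (m j) _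
    rw [Complex.cpow_neg, div_eq_mul_inv, inv_inv, Complex.cpow_natCast]
    push_cast [Complex.ofReal_div]
    rw [div_pow, div_eq_mul_inv]
    rw [my_binom (((q : ℝ) ^ E : ℝ) : ℂ) n]
    rw [Finset.sum_mul, Finset.mul_sum, Finset.mul_sum]
    refine Finset.sum_congr rfl fun l hl => ?_
    have hT : (((q : ℝ) ^ E : ℝ) : ℂ) ^ l
        = ((q ^ ((l : ℝ) * w) : ℝ) : ℂ) * ∏ j, (((q ^ ((l : ℝ) * w' j) : ℝ)) : ℂ) ^ (m j) := by
      rw [← Complex.ofReal_pow, hprod l]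
      push_cast
      rfl
    rw [hu2, hT, hA]
    rw [show ∀ c : Fin r → ℂ, ∏ j, (c j * u ^ ((v j : ℝ) : ℂ)) ^ (m j)
        = (∏ j, c j ^ (m j)) * ∏ j, (u ^ ((v j : ℝ) : ℂ)) ^ (m j) from
      fun c => by
        rw [← Finset.prod_mul_distrib]
        exact Finset.prod_congr rfl fun j _ => mul_pow _ _ _]
    ring
  -- summability for each l
  have hsum : ∀ l : ℕ, Summable (fun m : Fin r → ℕ => ∏ j, (A l j) ^ (m j)) :=
    fun l => ((my_geom_pi r (A l) (hAlt l)).1).of_norm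
  have htsum : ∀ l : ℕ, ∑' m : Fin r → ℕ, ∏ j, (A l j) ^ (m j) = ∏ j, (1 - A l j)⁻¹ :=
    fun l => (my_geom_pi r (A l) (hAlt l)).2
  calc (∑' m : Fin r → ℕ,
        u ^ ((∑ i, v i * m i : ℝ) : ℂ) /
          ((((1 - q ^ (w + ∑ i, m i * w' i)) / (1 - q) : ℝ) : ℂ)) ^ (-(n : ℂ)))
      = ∑' m : Fin r → ℕ, (1 / (1 - (q : ℂ))) ^ n * ∑ l ∈ Finset.range (n + 1),
          (n.choose l : ℂ) * (-1 : ℂ) ^ l * ((q ^ ((l : ℝ) * w) : ℝ) : ℂ) *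
            ∏ j, (A l j) ^ (m j) := tsum_congr key
    _ = (1 / (1 - (q : ℂ))) ^ n * ∑' m : Fin r → ℕ, ∑ l ∈ Finset.range (n + 1),
          (n.choose l : ℂ) * (-1 : ℂ) ^ l * ((q ^ ((l : ℝ) * w) : ℝ) : ℂ) *
            ∏ j, (A l j) ^ (m j) := tsum_mul_left
    _ = (1 / (1 - (q : ℂ))) ^ n * ∑ l ∈ Finset.range (n + 1), ∑' m : Fin r → ℕ,
          (n.choose l : ℂ) * (-1 : ℂ) ^ l * ((q ^ ((l : ℝ) * w) : ℝ) : ℂ) *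
            ∏ j, (A l j) ^ (m j) := by
        rw [Summable.tsum_finsetSum]
        intro l hl
        exact (hsum l).mul_left _
    _ = (1 / (1 - (q : ℂ))) ^ n * ∑ l ∈ Finset.range (n + 1),
          (n.choose l : ℂ) * (-1 : ℂ) ^ l * ((q ^ ((l : ℝ) * w) : ℝ) : ℂ) *
            ∏ j, (1 - A l j)⁻¹ := by
        congr 1
        refine Finset.sum_congr rfl fun l hl => ?_
        rw [tsum_mul_left, htsum l]
    _ = (1 / (1 - u) ^ r) *
        (((1 - u) ^ r / (1 - (q : ℂ)) ^ n) *
          ∑ l ∈ Finset.range (n + 1),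
            (n.choose l : ℂ) * (-1 : ℂ) ^ l * ((q ^ (l * w) : ℝ) : ℂ) *
              ∏ j, (1 - ((q ^ (l * w' j) : ℝ) : ℂ) * u ^ ((v j : ℝ) : ℂ))⁻¹) := by
        rw [hA]
        have hur : (1 - u) ^ r ≠ 0 := pow_ne_zero r hu1
        have hqn : (1 - (q:ℂ)) ^ n ≠ 0 := pow_ne_zero n hQ1
        field_simp
        simp only [mul_comm w]
        rw [one_div, inv_pow, mul_comm, ← mul_assoc, mul_inv_cancel₀ hqn, one_mul]
end

section
/- Let 0 < q < 1 be real, u complex with 0 < |u| < 1, and w, w₁, v₁ positive reals. The series ζ_q(s,w,u|w₁;v₁) = ∑_{n=0}^{∞} u^{v₁ n}/([w + w₁ n]_q)^s converges absolutely for every s ∈ ℂ and defines an entire function of s. -/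
open Complex

theorem stmt_13 (q : ℝ) (hq0 : 0 < q) (hq1 : q < 1) (u : ℂ)
    (hu0 : 0 < ‖u‖) (hu : ‖u‖ < 1)
    (w w₁ v₁ : ℝ) (hw : 0 < w) (hw₁ : 0 < w₁) (hv₁ : 0 < v₁) :
    (∀ s : ℂ, Summable (fun n : ℕ =>
        u ^ ((v₁ * n : ℝ) : ℂ) /
          ((((1 - q ^ (w + w₁ * n)) / (1 - q) : ℝ) : ℂ)) ^ s)) ∧
      Differentiable ℂ (fun s : ℂ =>
        ∑' n : ℕ, u ^ ((v₁ * n : ℝ) : ℂ) /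
          ((((1 - q ^ (w + w₁ * n)) / (1 - q) : ℝ) : ℂ)) ^ s) := by
  have h1q : (0:ℝ) < 1 - q := by linarith
  set z : ℕ → ℝ := fun n => (1 - q ^ (w + w₁ * n)) / (1 - q) with hzdef
  set a : ℝ := (1 - q ^ w) / (1 - q) with ha
  set b : ℝ := 1 / (1 - q) with hb
  have hapos : 0 < a := by
    apply div_pos _ h1q
    have : q ^ w < 1 := Real.rpow_lt_one hq0.le hq1 hw
    linarith
  have hbpos : 0 < b := by positivity
  have hza : ∀ n, a ≤ z n := by
    intro n
    have h0 : (0:ℝ) ≤ w₁ * n := by positivity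
    have h1 : q ^ (w + w₁ * n) ≤ q ^ w :=
      Real.rpow_le_rpow_of_exponent_ge hq0 hq1.le (by linarith)
    exact div_le_div_of_nonneg_right (by linarith) h1q.le
  have hzb : ∀ n, z n ≤ b := by
    intro n
    have h1 : 0 ≤ q ^ (w + w₁ * n) := Real.rpow_nonneg hq0.le _
    exact div_le_div_of_nonneg_right (by linarith) h1q.le
  have hzpos : ∀ n, 0 < z n := fun n => hapos.trans_le (hza n)
  set r : ℝ := ‖u‖ ^ v₁ with hr
  have hr0 : 0 ≤ r := Real.rpow_nonneg (norm_nonneg u) _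
  have hr1 : r < 1 := Real.rpow_lt_one (norm_nonneg u) hu hv₁
  -- norm of each term
  have hnorm : ∀ (n : ℕ) (s : ℂ),
      ‖u ^ ((v₁ * n : ℝ) : ℂ) / (((z n : ℝ) : ℂ)) ^ s‖ = r ^ n / (z n) ^ s.re := by
    intro n s
    rw [norm_div, Complex.norm_cpow_real,
      Complex.norm_cpow_eq_rpow_re_of_pos (hzpos n)]
    congr 1
    rw [Real.rpow_mul (norm_nonneg u), Real.rpow_natCast]
  set M : ℝ := max |Real.log a| |Real.log b| with hM
  have hM0 : 0 ≤ M := le_trans (abs_nonneg _) (le_max_left _ _)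
  -- uniform bound on strips
  have hbound : ∀ (R : ℝ), 0 ≤ R → ∀ (n : ℕ) (s : ℂ), |s.re| ≤ R →
      ‖u ^ ((v₁ * n : ℝ) : ℂ) / (((z n : ℝ) : ℂ)) ^ s‖ ≤ Real.exp (R * M) * r ^ n := by
    intro R hR n s hs
    rw [hnorm n s]
    have hlog : |Real.log (z n)| ≤ M :=
      abs_le_max_abs_abs (Real.log_le_log hapos (hza n)) (Real.log_le_log (hzpos n) (hzb n))
    have h1 : -(R * M) ≤ Real.log (z n) * s.re := by
      have habs : |Real.log (z n) * s.re| ≤ R * M := by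
        rw [abs_mul, mul_comm]
        exact mul_le_mul hs hlog (abs_nonneg _) hR
      linarith [(abs_le.mp habs).1]
    have h2 : Real.exp (-(R * M)) ≤ (z n) ^ s.re := by
      rw [Real.rpow_def_of_pos (hzpos n)]
      exact Real.exp_le_exp.mpr h1
    rw [div_eq_mul_inv, mul_comm (Real.exp _)]
    apply mul_le_mul_of_nonneg_left _ (pow_nonneg hr0 n)
    have h3 := inv_anti₀ (Real.exp_pos (-(R * M))) h2
    rwa [Real.exp_neg, inv_inv] at h3
  have hgeo : ∀ C : ℝ, Summable (fun n : ℕ => C * r ^ n) :=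
    fun C => (summable_geometric_of_lt_one hr0 hr1).mul_left C
  -- differentiability of each term
  have hfd : ∀ n : ℕ, Differentiable ℂ
      (fun s : ℂ => u ^ ((v₁ * n : ℝ) : ℂ) / (((z n : ℝ) : ℂ)) ^ s) := by
    intro n
    have hzc : ((z n : ℝ) : ℂ) ≠ 0 := by exact_mod_cast (hzpos n).ne'
    exact (differentiable_const _).div (differentiable_id.const_cpow (Or.inl hzc))
      (fun x => by simp [Complex.cpow_eq_zero_iff, hzc])
  constructor
  · intro s
    apply Summable.of_norm
    apply Summable.of_nonneg_of_le (fun n => norm_nonneg _)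
      (fun n => hbound |s.re| (abs_nonneg _) n s le_rfl) (hgeo _)
  · intro s₀
    set R : ℝ := |s₀.re| + 1 with hRdef
    set U : Set ℂ := {s : ℂ | |s.re| < R} with hU
    have hUopen : IsOpen U := isOpen_lt (Complex.continuous_re.abs) continuous_const
    have hs₀U : s₀ ∈ U := by simp only [hU, Set.mem_setOf_eq]; linarith
    have htlu : TendstoUniformlyOn
        (fun (t : Finset ℕ) (x : ℂ) => ∑ n ∈ t,
          u ^ ((v₁ * n : ℝ) : ℂ) / (((z n : ℝ) : ℂ)) ^ x)
        (fun x => ∑' n : ℕ, u ^ ((v₁ * n : ℝ) : ℂ) / (((z n : ℝ) : ℂ)) ^ x)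
        Filter.atTop U := by
      apply tendstoUniformlyOn_tsum (hgeo (Real.exp (R * M)))
      intro n x hx
      exact hbound R (by positivity) n x (le_of_lt hx)
    have hdOn : DifferentiableOn ℂ
        (fun x => ∑' n : ℕ, u ^ ((v₁ * n : ℝ) : ℂ) / (((z n : ℝ) : ℂ)) ^ x) U := by
      apply htlu.tendstoLocallyUniformlyOn.differentiableOn
        (Filter.Eventually.of_forall fun t => ?_) hUopen
      exact (Differentiable.fun_sum (fun n _ => hfd n)).differentiableOn
    exact hdOn.differentiableAt (hUopen.mem_nhds hs₀U)
end

section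
/- Let 0 < q < 1 be real, u complex with |u| < 1, and w, w₁, v₁ positive reals. Define H_{n,q}(u⁻¹,w|w₁;v₁) by the generating function (1-u)·∑_{l=0}^{∞} u^{v₁ l}·e^{[w + w₁ l]_q t} = ∑_{n=0}^{∞} H_{n,q}(u⁻¹,w|w₁;v₁)·t^n/n!. Then H_{n,q}(u⁻¹,w|w₁;v₁) = ((1-u)/(1-q)^n)·∑_{l=0}^{n} C(n,l)·(-1)^l·q^{lw}/(1 - q^{w₁ l} u^{v₁}). -/
open Complex

lemma aux_unique (c H : ℕ → ℂ)
    (hsum : ∀ r : NNReal, Summable fun n : ℕ => ‖c n / (n.factorial : ℂ)‖ * (r : ℝ) ^ n)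
    (heq : ∀ t : ℂ, (∑' n : ℕ, c n * t ^ n / (n.factorial : ℂ)) =
      ∑' n : ℕ, H n * t ^ n / (n.factorial : ℂ))
    (hc0 : c 0 ≠ 0) (n : ℕ) : H n = c n := by
  classical
  set G : ℂ → ℂ := fun t => ∑' n : ℕ, H n * t ^ n / (n.factorial : ℂ) with hGdef
  set qs := FormalMultilinearSeries.ofScalars ℂ (fun n => c n / (n.factorial : ℂ)) with hqs
  have hqsrad : qs.radius = ⊤ := by
    apply FormalMultilinearSeries.radius_eq_top_of_summable_norm
    intro r
    exact (hsum r).congr fun k => by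
      rw [hqs, FormalMultilinearSeries.ofScalars_norm]
  have hqssum : qs.sum = G := by
    funext t
    have h1 : qs.sum t = ∑' n : ℕ, (c n / (n.factorial : ℂ)) * t ^ n :=
      tsum_congr fun n => by
        rw [hqs, FormalMultilinearSeries.ofScalars_apply_eq, smul_eq_mul]
    calc qs.sum t = ∑' n : ℕ, (c n / (n.factorial : ℂ)) * t ^ n := h1
    _ = ∑' n : ℕ, c n * t ^ n / (n.factorial : ℂ) := tsum_congr fun k => by ring
    _ = G t := heq t
  have hQ : HasFPowerSeriesAt G qs 0 := by
    have h := qs.hasFPowerSeriesOnBall (by rw [hqsrad]; exact ENNReal.zero_lt_top)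
    rw [hqssum] at h
    exact h.hasFPowerSeriesAt
  have hG0 : G 0 = c 0 := by
    have : G 0 = ∑' n : ℕ, c n * (0:ℂ) ^ n / (n.factorial : ℂ) := (heq 0).symm
    rw [this, tsum_eq_single 0 (fun b hb => by simp [zero_pow hb])]
    simp
  have hne : ∀ᶠ t in nhds (0:ℂ), G t ≠ 0 := hQ.continuousAt.eventually_ne (hG0 ▸ hc0)
  obtain ⟨t₀, ht₀G, ht₀⟩ :=
    ((hne.filter_mono nhdsWithin_le_nhds).and eventually_mem_nhdsWithin).exists
    (f := nhdsWithin (0:ℂ) {(0:ℂ)}ᶜ)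
  have ht₀0 : t₀ ≠ 0 := ht₀
  have hsummH : Summable fun n : ℕ => H n * t₀ ^ n / (n.factorial : ℂ) := by
    by_contra h
    exact ht₀G (tsum_eq_zero_of_not_summable h)
  set ps := FormalMultilinearSeries.ofScalars ℂ (fun n => H n / (n.factorial : ℂ)) with hps
  have hrad : 0 < ps.radius := by
    refine lt_of_lt_of_le ?_ (ps.le_radius_of_tendsto (l := 0) (r := ‖t₀‖₊) ?_)
    · exact ENNReal.coe_pos.mpr (nnnorm_pos.mpr ht₀0)
    · have h0 := hsummH.tendsto_atTop_zero.norm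
      rw [norm_zero] at h0
      refine h0.congr fun k => ?_
      rw [hps, FormalMultilinearSeries.ofScalars_norm, coe_nnnorm,
        norm_div, norm_div, norm_mul, norm_pow, Complex.norm_natCast]
      ring
  have hpssum : ps.sum = G := by
    funext t
    have h1 : ps.sum t = ∑' n : ℕ, (H n / (n.factorial : ℂ)) * t ^ n :=
      tsum_congr fun n => by
        rw [hps, FormalMultilinearSeries.ofScalars_apply_eq, smul_eq_mul]
    rw [h1, hGdef]
    exact tsum_congr fun n => by ring
  have hP : HasFPowerSeriesAt G ps 0 := by
    have h := ps.hasFPowerSeriesOnBall hrad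
    rw [hpssum] at h
    exact h.hasFPowerSeriesAt
  have hpq : ps = qs := hP.eq_formalMultilinearSeries hQ
  have hco : (fun n => H n / (n.factorial : ℂ)) = fun n => c n / (n.factorial : ℂ) :=
    FormalMultilinearSeries.ofScalars_series_injective ℂ ℂ hpq
  have h := congrFun hco n
  have hk : ((n.factorial : ℂ)) ≠ 0 := Nat.cast_ne_zero.mpr n.factorial_ne_zero
  field_simp [hk] at h
  exact h

set_option maxHeartbeats 1600000 in
theorem stmt_14 (q : ℝ) (hq0 : 0 < q) (hq1 : q < 1) (u : ℂ) (hu : ‖u‖ < 1)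
    (w w₁ v₁ : ℝ) (hw : 0 < w) (hw₁ : 0 < w₁) (hv₁ : 0 < v₁)
    (H : ℕ → ℂ)
    (hH : ∀ t : ℂ,
      (1 - u) * ∑' l : ℕ, u ^ ((v₁ * l : ℝ) : ℂ) *
          Complex.exp ((((1 - q ^ (w + w₁ * l)) / (1 - q) : ℝ) : ℂ) * t) =
        ∑' n : ℕ, H n * t ^ n / (n.factorial : ℂ))
    (n : ℕ) :
    H n = ((1 - u) / (1 - (q : ℂ)) ^ n) *
      ∑ l ∈ Finset.range (n + 1),
        (n.choose l : ℂ) * (-1 : ℂ) ^ l * ((q ^ (l * w) : ℝ) : ℂ) /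
          (1 - ((q ^ (w₁ * l) : ℝ) : ℂ) * u ^ ((v₁ : ℝ) : ℂ)) := by
  have hq1' : (0:ℝ) < 1 - q := by linarith
  have habs : 0 ≤ ‖u‖ := norm_nonneg u
  set U : ℂ := u ^ ((v₁ : ℝ) : ℂ) with hUdef
  have hUabs : ‖U‖ < 1 := by
    rw [hUdef, norm_cpow_real]
    exact Real.rpow_lt_one habs hu hv₁
  have hUpos : (0:ℝ) < 1 - ‖U‖ := by linarith
  have hU1 : (1:ℂ) - U ≠ 0 := by
    intro h
    rw [sub_eq_zero] at h
    rw [← h] at hUabs; simp at hUabs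
  have hu1 : (1:ℂ) - u ≠ 0 := by
    intro h
    rw [sub_eq_zero] at h
    rw [← h] at hu; simp at hu
  -- basic rpow facts
  have hrpow_le_one : ∀ x : ℝ, 0 ≤ x → q ^ x ≤ 1 := fun x hx =>
    Real.rpow_le_one hq0.le hq1.le hx
  have hrU : ∀ k : ℕ, ‖((q ^ (w₁ * (k:ℝ)) : ℝ) : ℂ) * U‖ ≤ ‖U‖ := by
    intro k
    rw [norm_mul, Complex.norm_real, Real.norm_eq_abs,
      abs_of_pos (Real.rpow_pos_of_pos hq0 _)]
    calc q ^ (w₁ * (k:ℝ)) * ‖U‖ ≤ 1 * ‖U‖ := by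
          gcongr
          exact hrpow_le_one _ (by positivity)
    _ = ‖U‖ := one_mul _
  have hrUlt : ∀ k : ℕ, ‖((q ^ (w₁ * (k:ℝ)) : ℝ) : ℂ) * U‖ < 1 :=
    fun k => lt_of_le_of_lt (hrU k) hUabs
  have hden : ∀ k : ℕ, (1:ℂ) - ((q ^ (w₁ * (k:ℝ)) : ℝ) : ℂ) * U ≠ 0 := by
    intro k
    intro h
    rw [sub_eq_zero] at h
    have := hrUlt k
    rw [← h] at this; simp at this
  set cc : ℕ → ℂ := fun m => ((1 - u) / (1 - (q : ℂ)) ^ m) *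
      ∑ l ∈ Finset.range (m + 1),
        (m.choose l : ℂ) * (-1 : ℂ) ^ l * ((q ^ (l * w) : ℝ) : ℂ) /
          (1 - ((q ^ (w₁ * l) : ℝ) : ℂ) * U) with hcc
  show H n = cc n
  -- norm bound on cc
  have hccbound : ∀ m : ℕ, ‖cc m‖ ≤ (‖1 - u‖ * (1 - ‖U‖)⁻¹) * (2 * (1-q)⁻¹) ^ m := by
    intro m
    have h1q : ‖(1 : ℂ) - (q:ℂ)‖ = 1 - q := by
      rw [show (1:ℂ) - (q:ℂ) = ((1 - q : ℝ) : ℂ) by push_cast; ring,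
        Complex.norm_real, Real.norm_eq_abs, abs_of_pos hq1']
    have hsum_le : ‖∑ l ∈ Finset.range (m + 1),
        (m.choose l : ℂ) * (-1 : ℂ) ^ l * ((q ^ (l * w) : ℝ) : ℂ) /
          (1 - ((q ^ (w₁ * l) : ℝ) : ℂ) * U)‖ ≤ (2:ℝ)^m / (1 - ‖U‖) := by
      calc ‖∑ l ∈ Finset.range (m + 1),
          (m.choose l : ℂ) * (-1 : ℂ) ^ l * ((q ^ (l * w) : ℝ) : ℂ) /
            (1 - ((q ^ (w₁ * l) : ℝ) : ℂ) * U)‖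
          ≤ ∑ l ∈ Finset.range (m + 1), ‖(m.choose l : ℂ) * (-1 : ℂ) ^ l *
              ((q ^ (l * w) : ℝ) : ℂ) / (1 - ((q ^ (w₁ * l) : ℝ) : ℂ) * U)‖ :=
            norm_sum_le _ _
        _ ≤ ∑ l ∈ Finset.range (m + 1), (m.choose l : ℝ) / (1 - ‖U‖) := by
            apply Finset.sum_le_sum
            intro k _
            rw [norm_div, norm_mul, norm_mul, norm_pow, norm_neg, norm_one, one_pow,
              mul_one, Complex.norm_natCast, Complex.norm_real, Real.norm_eq_abs,
              abs_of_pos (Real.rpow_pos_of_pos hq0 _)]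
            have hnum : (m.choose k : ℝ) * q ^ ((k:ℝ) * w) ≤ (m.choose k : ℝ) :=
              mul_le_of_le_one_right (Nat.cast_nonneg _) (hrpow_le_one _ (by positivity))
            have hden2 : 1 - ‖U‖ ≤ ‖(1:ℂ) - ((q ^ (w₁ * (k:ℝ)) : ℝ) : ℂ) * U‖ := by
              have h2 := norm_sub_norm_le (1:ℂ) (((q ^ (w₁ * (k:ℝ)) : ℝ) : ℂ) * U)
              rw [norm_one] at h2
              have := hrU k
              linarith
            exact div_le_div₀ (Nat.cast_nonneg _) hnum hUpos hden2
        _ ≤ (2:ℝ)^m / (1 - ‖U‖) := by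
            rw [← Finset.sum_div]
            apply le_of_eq
            congr 1
            exact_mod_cast Nat.sum_range_choose m
    calc ‖cc m‖ = ‖(1 - u) / (1 - (q : ℂ)) ^ m‖ * ‖∑ l ∈ Finset.range (m + 1),
          (m.choose l : ℂ) * (-1 : ℂ) ^ l * ((q ^ (l * w) : ℝ) : ℂ) /
            (1 - ((q ^ (w₁ * l) : ℝ) : ℂ) * U)‖ := norm_mul _ _
      _ ≤ ‖(1 - u) / (1 - (q : ℂ)) ^ m‖ * ((2:ℝ)^m / (1 - ‖U‖)) := by
          gcongr
      _ = (‖1 - u‖ * (1 - ‖U‖)⁻¹) * (2 * (1-q)⁻¹) ^ m := by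
          rw [norm_div, norm_pow, h1q, mul_pow]
          ring
  refine aux_unique cc H ?_ ?_ ?_ n
  · -- summability
    intro r
    refine Summable.of_nonneg_of_le (fun m => by positivity) (fun m => ?_)
      (((Real.summable_pow_div_factorial ((2 * (1-q)⁻¹) * r)).mul_left
        (‖1 - u‖ * (1 - ‖U‖)⁻¹)))
    rw [norm_div, Complex.norm_natCast]
    calc ‖cc m‖ / (m.factorial : ℝ) * (r:ℝ) ^ m
        ≤ ((‖1 - u‖ * (1 - ‖U‖)⁻¹) * (2 * (1-q)⁻¹) ^ m) / (m.factorial : ℝ) * (r:ℝ) ^ m := by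
          gcongr
          exact hccbound m
      _ = (‖1 - u‖ * (1 - ‖U‖)⁻¹) * (((2 * (1-q)⁻¹) * r) ^ m / (m.factorial : ℝ)) := by
          rw [mul_pow]; ring
  · -- generating identity
    intro t
    rw [← hH t]
    have hexp : ∀ z : ℂ, Complex.exp z = ∑' k : ℕ, z ^ k / (k.factorial : ℂ) := fun z => by
      rw [Complex.exp_eq_exp_ℂ, NormedSpace.exp_eq_tsum_div]
    have hterm : ∀ l : ℕ, u ^ ((v₁ * l : ℝ) : ℂ) = U ^ l := by
      intro l
      rw [show ((v₁ * (l:ℕ) : ℝ) : ℂ) = ((l:ℕ) : ℂ) * ((v₁ : ℝ) : ℂ) by push_cast; ring,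
        Complex.cpow_nat_mul]
    have haCnorm : ∀ l : ℕ, ‖(((1 - q ^ (w + w₁ * l)) / (1 - q) : ℝ) : ℂ)‖ ≤ (1-q)⁻¹ := by
      intro l
      have h1 : 0 < q ^ (w + w₁ * (l:ℕ)) := Real.rpow_pos_of_pos hq0 _
      have h2 : q ^ (w + w₁ * (l:ℕ)) ≤ 1 := hrpow_le_one _ (by positivity)
      rw [Complex.norm_real, Real.norm_eq_abs,
        _root_.abs_of_nonneg (div_nonneg (by linarith) hq1'.le), ← one_div]
      exact div_le_div₀ zero_le_one (by linarith) hq1' le_rfl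
    have hswap : ∑' l : ℕ, U ^ l *
          Complex.exp ((((1 - q ^ (w + w₁ * l)) / (1 - q) : ℝ) : ℂ) * t)
        = ∑' m : ℕ, (∑' l : ℕ, U ^ l * (((1 - q ^ (w + w₁ * l)) / (1 - q) : ℝ) : ℂ) ^ m)
            * t ^ m / (m.factorial : ℂ) := by
      have hf : Summable (Function.uncurry fun (l k : ℕ) =>
          U ^ l * ((((1 - q ^ (w + w₁ * l)) / (1 - q) : ℝ) : ℂ) * t) ^ k
            / (k.factorial : ℂ)) := by
        apply Summable.of_norm
        have hb := Summable.mul_of_nonneg (summable_geometric_of_lt_one (norm_nonneg U) hUabs)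
          (Real.summable_pow_div_factorial ((1-q)⁻¹ * ‖t‖))
          (fun l => by positivity) (fun k => by positivity)
        refine Summable.of_nonneg_of_le (fun p => norm_nonneg _) (fun p => ?_) hb
        obtain ⟨l, k⟩ := p
        simp only [Function.uncurry_apply_pair]
        rw [norm_div, norm_mul, norm_pow, norm_pow, norm_mul, Complex.norm_natCast,
          mul_div_assoc]
        gcongr
        exact haCnorm l
      calc ∑' l : ℕ, U ^ l * Complex.exp ((((1 - q ^ (w + w₁ * l)) / (1 - q) : ℝ) : ℂ) * t)
          = ∑' l : ℕ, ∑' k : ℕ,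
              U ^ l * ((((1 - q ^ (w + w₁ * l)) / (1 - q) : ℝ) : ℂ) * t) ^ k
                / (k.factorial : ℂ) :=
            tsum_congr fun l => by
              rw [hexp, ← tsum_mul_left]
              exact tsum_congr fun k => by rw [mul_div_assoc]
        _ = ∑' k : ℕ, ∑' l : ℕ,
              U ^ l * ((((1 - q ^ (w + w₁ * l)) / (1 - q) : ℝ) : ℂ) * t) ^ k
                / (k.factorial : ℂ) := (hf.tsum_comm).symm
        _ = ∑' k : ℕ, (∑' l : ℕ, U ^ l * (((1 - q ^ (w + w₁ * l)) / (1 - q) : ℝ) : ℂ) ^ k)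
              * t ^ k / (k.factorial : ℂ) :=
            tsum_congr fun k => by
              rw [mul_div_assoc, ← tsum_mul_right]
              exact tsum_congr fun l => by rw [mul_pow]; ring
    have hclosed : ∀ m : ℕ, (1 - u) * ∑' l : ℕ,
        U ^ l * (((1 - q ^ (w + w₁ * l)) / (1 - q) : ℝ) : ℂ) ^ m = cc m := by
      intro m
      have hterm2 : ∀ l : ℕ, U ^ l * (((1 - q ^ (w + w₁ * l)) / (1 - q) : ℝ) : ℂ) ^ m
          = ∑ k ∈ Finset.range (m + 1),
              ((m.choose k : ℂ) * (-1:ℂ) ^ k * ((q ^ ((k:ℝ) * w) : ℝ) : ℂ) / (1 - (q:ℂ)) ^ m)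
                * (((q ^ (w₁ * (k:ℝ)) : ℝ) : ℂ) * U) ^ l := by
        intro l
        have hQk : ∀ k : ℕ, (((q ^ (w + w₁ * (l:ℕ)) : ℝ)) : ℂ) ^ k
            = ((q ^ ((k:ℝ) * w) : ℝ) : ℂ) * (((q ^ (w₁ * (k:ℝ)) : ℝ)) : ℂ) ^ l := by
          intro k
          have e1 : (q ^ (w + w₁ * (l:ℕ)) : ℝ) ^ k
              = q ^ ((k:ℝ) * w) * (q ^ (w₁ * (k:ℝ))) ^ l := by
            rw [← Real.rpow_natCast (q ^ (w + w₁ * (l:ℕ))) k, ← Real.rpow_mul hq0.le,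
              show (w + w₁ * (l:ℕ)) * (k:ℝ) = (k:ℝ) * w + (w₁ * (k:ℝ)) * (l:ℕ) by ring,
              Real.rpow_add hq0, Real.rpow_mul hq0.le (w₁ * (k:ℝ)), Real.rpow_natCast]
          calc (((q ^ (w + w₁ * (l:ℕ)) : ℝ)) : ℂ) ^ k
              = (((q ^ (w + w₁ * (l:ℕ)) : ℝ) ^ k : ℝ) : ℂ) := by push_cast; ring
            _ = _ := by rw [e1]; push_cast; ring
        have haCl : (((1 - q ^ (w + w₁ * l)) / (1 - q) : ℝ) : ℂ)
            = (-((((q ^ (w + w₁ * (l:ℕ)) : ℝ))) : ℂ) + 1) / (1 - (q:ℂ)) := by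
          push_cast
          ring
        rw [haCl, div_pow, add_pow, Finset.sum_div, Finset.mul_sum]
        apply Finset.sum_congr rfl
        intro k _
        rw [one_pow, mul_one, neg_pow, hQk k, mul_pow]
        ring
      have hsums : ∀ k ∈ Finset.range (m+1), Summable (fun l : ℕ =>
          ((m.choose k : ℂ) * (-1:ℂ) ^ k * ((q ^ ((k:ℝ) * w) : ℝ) : ℂ) / (1 - (q:ℂ)) ^ m)
            * (((q ^ (w₁ * (k:ℝ)) : ℝ) : ℂ) * U) ^ l) := by
        intro k _
        exact (summable_geometric_of_norm_lt_one (hrUlt k)).mul_left _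
      calc (1 - u) * ∑' l : ℕ,
            U ^ l * (((1 - q ^ (w + w₁ * l)) / (1 - q) : ℝ) : ℂ) ^ m
          = (1 - u) * ∑' l : ℕ, ∑ k ∈ Finset.range (m + 1),
              ((m.choose k : ℂ) * (-1:ℂ) ^ k * ((q ^ ((k:ℝ) * w) : ℝ) : ℂ) / (1 - (q:ℂ)) ^ m)
                * (((q ^ (w₁ * (k:ℝ)) : ℝ) : ℂ) * U) ^ l := by
            rw [tsum_congr hterm2]
        _ = (1 - u) * ∑ k ∈ Finset.range (m + 1), ∑' l : ℕ,
              ((m.choose k : ℂ) * (-1:ℂ) ^ k * ((q ^ ((k:ℝ) * w) : ℝ) : ℂ) / (1 - (q:ℂ)) ^ m)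
                * (((q ^ (w₁ * (k:ℝ)) : ℝ) : ℂ) * U) ^ l := by
            rw [Summable.tsum_finsetSum hsums]
        _ = (1 - u) * ∑ k ∈ Finset.range (m + 1),
              ((m.choose k : ℂ) * (-1:ℂ) ^ k * ((q ^ ((k:ℝ) * w) : ℝ) : ℂ) / (1 - (q:ℂ)) ^ m)
                * (1 - (((q ^ (w₁ * (k:ℝ)) : ℝ)) : ℂ) * U)⁻¹ := by
            congr 1
            apply Finset.sum_congr rfl
            intro k _
            rw [tsum_mul_left, tsum_geometric_of_norm_lt_one (hrUlt k)]
        _ = cc m := by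
            simp only [hcc]
            rw [Finset.mul_sum, Finset.mul_sum]
            apply Finset.sum_congr rfl
            intro k _
            ring
    have h1 : ∑' l : ℕ, u ^ ((v₁ * l : ℝ) : ℂ) *
          Complex.exp ((((1 - q ^ (w + w₁ * l)) / (1 - q) : ℝ) : ℂ) * t)
        = ∑' l : ℕ, U ^ l *
          Complex.exp ((((1 - q ^ (w + w₁ * l)) / (1 - q) : ℝ) : ℂ) * t) :=
      tsum_congr fun l => by rw [hterm l]
    rw [h1, hswap, ← tsum_mul_left]
    exact tsum_congr fun m => by rw [← hclosed m]; ring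
  · -- cc 0 ≠ 0
    have h0 : cc 0 = (1 - u) * (1 - U)⁻¹ := by
      rw [hcc]
      simp [Finset.sum_range_one, one_div]
    rw [h0]
    exact mul_ne_zero hu1 (inv_ne_zero hU1)
end
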